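/- Let d, M be positive integers, x_1, …, x_M ∈ ℝ^d, r_1, …, r_M ∈ ℝ, ζ > 0, ε > 0. Define u*(w)_i = 1 if (r_i − ⟨x_i, w⟩)² < ε, else 0. Let w⁽⁰⁾ ∈ ℝ^d and for t ≥ 0 set u⁽ᵗ⁾ = u*(w⁽ᵗ⁾) and w⁽ᵗ⁺¹⁾ = (Σ_{i=1}^M u_i⁽ᵗ⁾ x_i x_iᵀ + ζ I)⁻¹ (Σ_{i=1}^M u_i⁽ᵗ⁾ r_i x_i). Then the series Σ_{t=1}^∞ ‖w⁽ᵗ⁾ − w⁽ᵗ⁻¹⁾‖² converges (the family (‖w⁽ᵗ⁾ − w⁽ᵗ⁻¹⁾‖²)_{t≥1} is summable). -/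

import Mathlib

open scoped RealInnerProductSpace
open Finset Matrix

/-! The iteration is a majorize–minimize scheme for the truncated ridge loss
`J v = ∑ i, min ((r i - ⟪x i, v⟫) ^ 2) ε + ζ * ‖v‖ ^ 2`. For weights `c` with values in `[0, 1]`,
the weighted ridge loss `F_c` plus the constant `∑ i, (1 - c i) * ε` majorizes `J`, with equality
at `w` when `c = u*(w)`. The next iterate solves the normal equations of `F_c`, and `F_c` is
`ζ`-strongly convex, so each step lowers `J` by at least `ζ * ‖w⁽ᵗ⁺¹⁾ - w⁽ᵗ⁾‖ ^ 2`; since `J ≥ 0`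
these decrements are summable. -/

section Losses

variable {ι E : Type*} [NormedAddCommGroup E] [InnerProductSpace ℝ E]
  (x : ι → E) (r : ι → ℝ) (ζ : ℝ)

noncomputable def thresholdWeights (ε : ℝ) (v : E) (i : ι) : ℝ :=
  if (r i - ⟪x i, v⟫) ^ 2 < ε then 1 else 0

theorem thresholdWeights_mem_Icc (ε : ℝ) (v : E) (i : ι) :
    thresholdWeights x r ε v i ∈ Set.Icc 0 1 := by
  unfold thresholdWeights
  split_ifs <;> norm_num

variable [Fintype ι]

noncomputable def weightedRidgeLoss (c : ι → ℝ) (v : E) : ℝ :=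
  ∑ i, c i * (r i - ⟪x i, v⟫) ^ 2 + ζ * ‖v‖ ^ 2

noncomputable def truncatedRidgeLoss (ε : ℝ) (v : E) : ℝ :=
  ∑ i, min ((r i - ⟪x i, v⟫) ^ 2) ε + ζ * ‖v‖ ^ 2

variable {x r ζ}

theorem weightedRidgeLoss_add_of_normal_eq {c : ι → ℝ} {w : E}
    (hw : ∑ i, c i • (r i - ⟪x i, w⟫) • x i = ζ • w) (h : E) :
    weightedRidgeLoss x r ζ c (w + h) =
      weightedRidgeLoss x r ζ c w + (∑ i, c i * ⟪x i, h⟫ ^ 2 + ζ * ‖h‖ ^ 2) := by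
  have hcross : ∑ i, c i * ((r i - ⟪x i, w⟫) * ⟪x i, h⟫) = ζ * ⟪w, h⟫ := by
    simpa [sum_inner, real_inner_smul_left, mul_assoc] using congrArg (⟪·, h⟫) hw
  have hterm : ∀ i, c i * (r i - (⟪x i, w⟫ + ⟪x i, h⟫)) ^ 2 = c i * (r i - ⟪x i, w⟫) ^ 2
      - 2 * (c i * ((r i - ⟪x i, w⟫) * ⟪x i, h⟫)) + c i * ⟪x i, h⟫ ^ 2 := fun i => by ring
  simp only [weightedRidgeLoss, inner_add_right, norm_add_sq_real, hterm, sum_add_distrib,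
    sum_sub_distrib, ← mul_sum, hcross]
  ring

theorem weightedRidgeLoss_add_sq_le_of_normal_eq {c : ι → ℝ} (hc : ∀ i, 0 ≤ c i) {w : E}
    (hw : ∑ i, c i • (r i - ⟪x i, w⟫) • x i = ζ • w) (v : E) :
    weightedRidgeLoss x r ζ c w + ζ * ‖v - w‖ ^ 2 ≤ weightedRidgeLoss x r ζ c v := by
  have hq : 0 ≤ ∑ i, c i * ⟪x i, v - w⟫ ^ 2 := sum_nonneg fun i _ => by have := hc i; positivity
  have := weightedRidgeLoss_add_of_normal_eq hw (v - w)
  rw [add_sub_cancel] at this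
  linarith

theorem truncatedRidgeLoss_le_weightedRidgeLoss_add {c : ι → ℝ} (hc : ∀ i, c i ∈ Set.Icc 0 1)
    (ε : ℝ) (v : E) :
    truncatedRidgeLoss x r ζ ε v ≤ weightedRidgeLoss x r ζ c v + ∑ i, (1 - c i) * ε := by
  rw [truncatedRidgeLoss, weightedRidgeLoss, add_right_comm, ← sum_add_distrib]
  gcongr with i
  obtain ⟨hc0, hc1⟩ := hc i
  -- `min a ε` is below every convex combination of `a` and `ε`
  nlinarith [min_le_left ((r i - ⟪x i, v⟫) ^ 2) ε, min_le_right ((r i - ⟪x i, v⟫) ^ 2) ε]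

theorem truncatedRidgeLoss_eq_weightedRidgeLoss_add (ε : ℝ) (v : E) :
    truncatedRidgeLoss x r ζ ε v = weightedRidgeLoss x r ζ (thresholdWeights x r ε v) v
      + ∑ i, (1 - thresholdWeights x r ε v i) * ε := by
  rw [truncatedRidgeLoss, weightedRidgeLoss, add_right_comm, ← sum_add_distrib]
  congr 1
  refine sum_congr rfl fun i _ => ?_
  unfold thresholdWeights
  split_ifs with h
  · rw [min_eq_left h.le]; ring
  · rw [min_eq_right (not_lt.1 h)]; ring

theorem truncatedRidgeLoss_nonneg (hζ : 0 ≤ ζ) {ε : ℝ} (hε : 0 ≤ ε) (v : E) :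
    0 ≤ truncatedRidgeLoss x r ζ ε v :=
  add_nonneg (sum_nonneg fun _ _ => le_min (sq_nonneg _) hε) (by positivity)

theorem truncatedRidgeLoss_add_sq_le {ε : ℝ} {v w : E}
    (hw : ∑ i, thresholdWeights x r ε v i • (r i - ⟪x i, w⟫) • x i = ζ • w) :
    truncatedRidgeLoss x r ζ ε w + ζ * ‖v - w‖ ^ 2 ≤ truncatedRidgeLoss x r ζ ε v := by
  have hc := thresholdWeights_mem_Icc x r ε v
  have := weightedRidgeLoss_add_sq_le_of_normal_eq (fun i => (hc i).1) hw v
  have := truncatedRidgeLoss_le_weightedRidgeLoss_add (x := x) (r := r) (ζ := ζ) hc ε w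
  rw [truncatedRidgeLoss_eq_weightedRidgeLoss_add ε v]
  linarith

end Losses

section RidgeMatrix

variable {ι n : Type*} [Fintype ι] [Fintype n] [DecidableEq n]
  (x : ι → EuclideanSpace ℝ n) (ζ : ℝ) (c : ι → ℝ)

def ridgeMatrix : Matrix n n ℝ :=
  ∑ i, c i • vecMulVec (x i) (x i) + ζ • (1 : Matrix n n ℝ)

theorem ridgeMatrix_mulVec (v : EuclideanSpace ℝ n) :
    ridgeMatrix x ζ c *ᵥ v = (∑ i, c i • ⟪x i, v⟫ • x i + ζ • v).ofLp := by
  simp [ridgeMatrix, add_mulVec, sum_mulVec, smul_mulVec, vecMulVec_mulVec,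
    EuclideanSpace.inner_eq_star_dotProduct, dotProduct_comm]

variable {x ζ c}

theorem ridgeMatrix_posDef (hζ : 0 < ζ) (hc : ∀ i, 0 ≤ c i) : (ridgeMatrix x ζ c).PosDef := by
  rw [ridgeMatrix, add_comm]
  refine (PosDef.one.smul hζ).add_posSemidef (posSemidef_sum _ fun i _ => ?_)
  simpa using (posSemidef_vecMulVec_self_star (x i).ofLp).smul (hc i)

theorem sum_smul_sub_inner_smul_eq_of_ofLp_eq_inv_mulVec (hζ : 0 < ζ) (hc : ∀ i, 0 ≤ c i)
    {r : ι → ℝ} {w : EuclideanSpace ℝ n}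
    (hw : w.ofLp = (ridgeMatrix x ζ c)⁻¹ *ᵥ ∑ i, c i • r i • (x i).ofLp) :
    ∑ i, c i • (r i - ⟪x i, w⟫) • x i = ζ • w := by
  have hdet : IsUnit (ridgeMatrix x ζ c).det :=
    (isUnit_iff_isUnit_det _).1 (ridgeMatrix_posDef hζ hc).isUnit
  have hsolve : ridgeMatrix x ζ c *ᵥ w.ofLp = ∑ i, c i • r i • (x i).ofLp := by
    rw [hw, mulVec_mulVec, mul_nonsing_inv _ hdet, one_mulVec]
  rw [ridgeMatrix_mulVec] at hsolve
  apply WithLp.ofLp_injective 2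
  simp only [sub_smul, smul_sub, sum_sub_distrib, WithLp.ofLp_sub, WithLp.ofLp_sum,
    WithLp.ofLp_smul, ← hsolve, WithLp.ofLp_add]
  abel

end RidgeMatrix

theorem summable_of_le_sub_of_bddBelow {f J : ℕ → ℝ} {B : ℝ} (hf : ∀ t, 0 ≤ f t)
    (hJ : ∀ t, B ≤ J t) (h : ∀ t, f t ≤ J t - J (t + 1)) : Summable f := by
  refine summable_of_sum_range_le hf (c := J 0 - B) fun n => ?_
  calc ∑ t ∈ range n, f t ≤ ∑ t ∈ range n, (J t - J (t + 1)) := sum_le_sum fun t _ => h t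
    _ = J 0 - J n := sum_range_sub' J n
    _ ≤ J 0 - B := by linarith [hJ n]

theorem stmt_9_general (d M : ℕ)
    (x : Fin M → EuclideanSpace ℝ (Fin d)) (r : Fin M → ℝ)
    (ζ ε : ℝ) (hζ : 0 < ζ) (hε : 0 < ε)
    (w : ℕ → EuclideanSpace ℝ (Fin d)) (u : ℕ → Fin M → ℝ)
    (hu : ∀ t i, u t i = if (r i - ⟪x i, w t⟫) ^ 2 < ε then 1 else 0)
    (hw : ∀ t, w (t + 1) =
      ((∑ i, u t i • Matrix.vecMulVec (x i) (x i)) +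
        ζ • (1 : Matrix (Fin d) (Fin d) ℝ))⁻¹.mulVec (∑ i, u t i • r i • x i)) :
    Summable (fun t : ℕ => ‖w (t + 1) - w t‖ ^ 2) := by
  have hu_eq : ∀ t, u t = thresholdWeights x r ε (w t) := fun t => funext (hu t)
  have hdescent : ∀ t, ζ * ‖w (t + 1) - w t‖ ^ 2 ≤
      truncatedRidgeLoss x r ζ ε (w t) - truncatedRidgeLoss x r ζ ε (w (t + 1)) := by
    intro t
    have hnormal := sum_smul_sub_inner_smul_eq_of_ofLp_eq_inv_mulVec hζ
      (fun i => (thresholdWeights_mem_Icc x r ε (w t) i).1) (hu_eq t ▸ hw t)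
    have := truncatedRidgeLoss_add_sq_le hnormal
    rw [norm_sub_rev]
    linarith
  exact (summable_mul_left_iff hζ.ne').1 <| summable_of_le_sub_of_bddBelow
    (fun t => by positivity) (fun t => truncatedRidgeLoss_nonneg hζ.le hε.le (w t)) hdescent

/-- first assertion of Lemma 2: the squared consecutive
differences of the reweighted iteration are summable. -/
theorem stmt_9 (d M : ℕ) (hd : 0 < d) (hM : 0 < M)
    (x : Fin M → EuclideanSpace ℝ (Fin d)) (r : Fin M → ℝ)
    (ζ ε : ℝ) (hζ : 0 < ζ) (hε : 0 < ε)
    (w : ℕ → EuclideanSpace ℝ (Fin d)) (u : ℕ → Fin M → ℝ)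
    (hu : ∀ t i, u t i = if (r i - ⟪x i, w t⟫) ^ 2 < ε then 1 else 0)
    (hw : ∀ t, w (t + 1) =
      ((∑ i, u t i • Matrix.vecMulVec (x i) (x i)) +
        ζ • (1 : Matrix (Fin d) (Fin d) ℝ))⁻¹.mulVec (∑ i, u t i • r i • x i)) :
    Summable (fun t : ℕ => ‖w (t + 1) - w t‖ ^ 2) :=
  stmt_9_general d M x r ζ ε hζ hε w u hu hw
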